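/- Exponential convergence of Clenshaw–Curtis quadrature: if f: [−1,1] → ℝ extends to an analytic function on a Bernstein ellipse with parameter ρ > 1 and is bounded by M there, then the N-point Clenshaw–Curtis quadrature approximation I_N(f) to ∫_{−1}^{1} f satisfies |I_N(f) − ∫_{−1}^{1} f| ≤ C M ρ^{−N} for some constant C depending only on ρ. -/

import Mathlib

/-!
Substituting `x = (w + w⁻¹)/2` turns `g` into a function `h` holomorphic on the annulus
`ρ⁻¹ ≤ |w| ≤ ρ` with `h (w⁻¹) = h w`; its Laurent coefficients on the unit circle are bounded by
`M ρ^{-|k|}` (Cauchy's estimate on the circle of radius `ρ` or `ρ⁻¹`), so `f` has a Chebyshev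
expansion `f = ∑ αₖ Tₖ` on `[-1, 1]` with `|αₖ| ≤ 2 M ρ^{-k}`. The quadrature error is a linear
functional that kills `Tₖ` for `k < N`; for larger `k`, at the nodes `cos (jπ/(N-1))` the
polynomial `Tₖ` coincides with some `Tₘ`, `m < N` (aliasing), so the error of `Tₖ` is at most
`|∫ Tₘ| + |∫ Tₖ| ≤ 4`. Summing the tail gives the bound `8 M ρ^{-N} / (1 - ρ⁻¹)`.
-/

open MeasureTheory Polynomial Polynomial.Chebyshev

section BernsteinEllipse
open Complex Metric Set

def bernsteinEllipse (ρ : ℝ) : Set ℂ :=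
  (fun z : ℂ => (z + z⁻¹) / 2) '' {z : ℂ | 1 ≤ ‖z‖ ∧ ‖z‖ ≤ ρ}

lemma joukowski_mem_bernsteinEllipse {ρ : ℝ} (hρ : 0 < ρ) {w : ℂ}
    (hw : w ∈ closedBall (0 : ℂ) ρ \ ball 0 ρ⁻¹) : (w + w⁻¹) / 2 ∈ bernsteinEllipse ρ := by
  simp only [mem_sdiff, mem_closedBall_zero_iff, mem_ball_zero_iff, not_lt] at hw
  rcases le_or_gt 1 ‖w‖ with h1 | h1
  · exact ⟨w, ⟨h1, hw.1⟩, rfl⟩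
  · have hw0 : 0 < ‖w‖ := (inv_pos.2 hρ).trans_le hw.2
    refine ⟨w⁻¹, ⟨?_, ?_⟩, by simp only [inv_inv, add_comm]⟩ <;> rw [norm_inv]
    · exact (one_le_inv₀ hw0).2 h1.le
    · exact inv_le_of_inv_le₀ hρ hw.2

lemma joukowski_exp_mul_I (θ : ℝ) : (exp (θ * I) + (exp (θ * I))⁻¹) / 2 = Real.cos θ := by
  rw [← exp_neg, ofReal_cos, cos, neg_mul]

end BernsteinEllipse

instance : Fact (0 < 2 * Real.pi) := ⟨Real.two_pi_pos⟩

section Laurent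
open Complex Metric Real

noncomputable def onUnitCircle (h : ℂ → ℂ) (θ : AddCircle (2 * π)) : ℂ := h (AddCircle.toCircle θ)

lemma onUnitCircle_coe (h : ℂ → ℂ) (θ : ℝ) : onUnitCircle h θ = h (exp (θ * I)) := by
  simp [onUnitCircle, AddCircle.toCircle_apply_mk, Circle.coe_exp]

lemma continuous_onUnitCircle {h : ℂ → ℂ} (hh : ContinuousOn h (sphere 0 1)) :
    Continuous (onUnitCircle h) :=
  hh.comp_continuous (continuous_subtype_val.comp AddCircle.continuous_toCircle)
    fun _ => mem_sphere_zero_iff_norm.2 (Circle.norm_coe _)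

lemma circleIntegral_zpow_mul_eq_fourierCoeff (h : ℂ → ℂ) (k : ℤ) :
    (∮ z in C(0, 1), z ^ (-(k + 1)) * h z) = 2 * π * I * fourierCoeff (onUnitCircle h) k := by
  have hπ : (π : ℂ) ≠ 0 := ofReal_ne_zero.2 pi_ne_zero
  have hpt : ∀ θ : ℝ,
      deriv (circleMap 0 1) θ • (circleMap 0 1 θ ^ (-(k + 1)) * h (circleMap 0 1 θ))
        = I * (fourier (-k) (θ : AddCircle (2 * π)) • onUnitCircle h θ) := by
    intro θ
    have hexp : exp (θ * I) * exp (θ * I) ^ (-(k + 1)) = exp (-k * (θ * I)) := by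
      rw [show -(k : ℂ) = ((-k : ℤ) : ℂ) by push_cast; rfl, exp_int_mul,
        ← zpow_one_add₀ (Complex.exp_ne_zero _)]
      congr 1; ring
    rw [deriv_circleMap, circleMap_zero, onUnitCircle_coe, fourier_coe_apply, smul_eq_mul,
      smul_eq_mul, ofReal_one, one_mul, ← mul_assoc, mul_right_comm _ I, hexp,
      show 2 * π * I * ((-k : ℤ) : ℂ) * θ / ((2 * π : ℝ) : ℂ) = -k * (θ * I) by
        push_cast; field_simp]
    ring
  rw [circleIntegral, fourierCoeff_eq_intervalIntegral _ k 0, zero_add]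
  simp_rw [hpt]
  rw [intervalIntegral.integral_const_mul, real_smul]
  push_cast
  field_simp

lemma ne_zero_of_mem_sdiff_ball {s : Set ℂ} {r : ℝ} (hr : 0 < r) {w : ℂ}
    (hw : w ∈ s \ ball 0 r) : w ≠ 0 := by
  rintro rfl
  exact hw.2 (mem_ball_self hr)

lemma circleIntegral_eq_of_differentiableOn_annulus {E : Type*} [NormedAddCommGroup E]
    [NormedSpace ℂ E] [CompleteSpace E] {f : ℂ → E} {c : ℂ} {r R s t : ℝ} (hr : 0 < r)
    (hd : DifferentiableOn ℂ f (closedBall c R \ ball c r)) (hs : s ∈ Set.Icc r R)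
    (ht : t ∈ Set.Icc r R) : (∮ z in C(c, s), f z) = ∮ z in C(c, t), f z := by
  wlog hst : s ≤ t generalizing s t
  · exact (this ht hs (le_of_not_ge hst)).symm
  have hsub : closedBall c t \ ball c s ⊆ closedBall c R \ ball c r :=
    Set.sdiff_subset_sdiff (closedBall_subset_closedBall ht.2) (ball_subset_ball hs.1)
  refine (circleIntegral_eq_of_differentiable_on_annulus_off_countable (hr.trans_le hs.1) hst
    Set.countable_empty (hd.continuousOn.mono hsub) fun z hz => ?_).symm
  have hopen : IsOpen (ball c t \ closedBall c s) := isOpen_ball.sdiff isClosed_closedBall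
  exact hd.differentiableAt (Filter.mem_of_superset (hopen.mem_nhds hz.1)
    ((Set.sdiff_subset_sdiff ball_subset_closedBall ball_subset_closedBall).trans hsub))

lemma norm_circleIntegral_zpow_mul_le {h : ℂ → ℂ} {r M : ℝ} (hr : 0 < r)
    (hM : ∀ z ∈ sphere (0 : ℂ) r, ‖h z‖ ≤ M) (k : ℤ) :
    ‖∮ z in C(0, r), z ^ (-(k + 1)) * h z‖ ≤ 2 * π * M * r ^ (-k) :=
  calc ‖∮ z in C(0, r), z ^ (-(k + 1)) * h z‖ ≤ 2 * π * r * (r ^ (-(k + 1)) * M) :=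
        circleIntegral.norm_integral_le_of_norm_le_const hr.le fun z hz => by
          rw [norm_mul, norm_zpow, mem_sphere_zero_iff_norm.1 hz]
          exact mul_le_mul_of_nonneg_left (hM z hz) (zpow_nonneg hr.le _)
    _ = 2 * π * M * r ^ (-k) := by
      rw [neg_add, zpow_add₀ hr.ne', zpow_neg_one]
      field_simp

lemma norm_fourierCoeff_onUnitCircle_le {h : ℂ → ℂ} {ρ M : ℝ} (hρ : 1 < ρ)
    (hd : DifferentiableOn ℂ h (closedBall 0 ρ \ ball 0 ρ⁻¹))
    (hM : ∀ z ∈ closedBall (0 : ℂ) ρ \ ball 0 ρ⁻¹, ‖h z‖ ≤ M) (k : ℤ) :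
    ‖fourierCoeff (onUnitCircle h) k‖ ≤ M * ρ⁻¹ ^ k.natAbs := by
  have hρ0 : 0 < ρ := one_pos.trans hρ
  have hρ1 : ρ⁻¹ ≤ 1 := inv_le_one_of_one_le₀ hρ.le
  obtain ⟨r, hr, hrk⟩ : ∃ r ∈ Set.Icc ρ⁻¹ ρ, r ^ (-k) = ρ⁻¹ ^ k.natAbs := by
    rcases le_or_gt 0 k with hk | hk
    · refine ⟨ρ, ⟨hρ1.trans hρ.le, le_rfl⟩, ?_⟩
      rw [zpow_neg, ← inv_zpow, ← zpow_natCast, Int.natAbs_of_nonneg hk]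
    · refine ⟨ρ⁻¹, ⟨le_rfl, hρ1.trans hρ.le⟩, ?_⟩
      rw [← zpow_natCast, Int.ofNat_natAbs_of_nonpos hk.le]
  have hdF : DifferentiableOn ℂ (fun z => z ^ (-(k + 1)) * h z) (closedBall 0 ρ \ ball 0 ρ⁻¹) :=
    fun z hz => ((differentiableAt_zpow.2 (Or.inl (ne_zero_of_mem_sdiff_ball (inv_pos.2 hρ0)
      hz))).differentiableWithinAt).mul (hd z hz)
  have hcircle := circleIntegral_eq_of_differentiableOn_annulus (inv_pos.2 hρ0) hdF hr
    ⟨hρ1, hρ.le⟩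
  have hbound := norm_circleIntegral_zpow_mul_le (hr.1.trans_lt' (inv_pos.2 hρ0))
    (fun z hz => hM z ?_) k
  · have h2π : ‖(2 * π * I : ℂ)‖ = 2 * π := by simp [abs_of_pos pi_pos]
    rw [hcircle, circleIntegral_zpow_mul_eq_fourierCoeff, norm_mul, h2π, hrk] at hbound
    exact le_of_mul_le_mul_left (hbound.trans_eq (mul_assoc _ _ _)) two_pi_pos
  · rw [mem_sphere_zero_iff_norm] at hz
    simp only [Set.mem_sdiff, mem_closedBall_zero_iff, mem_ball_zero_iff, hz, not_lt]
    exact ⟨hr.2, hr.1⟩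

lemma hasSum_fourierCoeff_onUnitCircle {h : ℂ → ℂ} (hh : ContinuousOn h (sphere 0 1))
    (hs : Summable (fourierCoeff (onUnitCircle h))) (θ : ℝ) :
    HasSum (fun k : ℤ => fourierCoeff (onUnitCircle h) k * exp (k * (θ * I)))
      (h (exp (θ * I))) := by
  have := has_pointwise_sum_fourier_series_of_summable (f := ⟨_, continuous_onUnitCircle hh⟩) hs θ
  simp only [ContinuousMap.coe_mk, onUnitCircle_coe, fourier_coe_apply, smul_eq_mul] at this
  convert this using 3 with k
  have hπ : (π : ℂ) ≠ 0 := ofReal_ne_zero.2 pi_ne_zero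
  push_cast
  field_simp

lemma hasSum_cos_of_even {u : ℝ → ℂ} (hu : ∀ θ, u (-θ) = u θ) {c : ℤ → ℂ}
    (hc : ∀ θ : ℝ, HasSum (fun k : ℤ => c k * exp (k * (θ * I))) (u θ)) (θ : ℝ) :
    HasSum (fun n : ℕ => (if n = 0 then c 0 else c n + c (-n)) * cos ((n : ℂ) * θ)) (u θ) := by
  have hminus := (hc (-θ)).nat_add_neg
  rw [hu] at hminus
  have key := (((hc θ).nat_add_neg.add hminus).div_const 2).sub (hasSum_ite_eq 0 (c 0))
  rw [show (u θ + c 0 * exp ((0 : ℤ) * (θ * I)) + (u θ + c 0 * exp ((0 : ℤ) * ((-θ : ℝ) * I))))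
    / 2 - c 0 = u θ by simp] at key
  refine key.congr_fun fun n => ?_
  rcases eq_or_ne n 0 with rfl | hn
  · simp
  · simp only [hn, if_false, Complex.cos, sub_zero]
    push_cast
    ring_nf

theorem exists_hasSum_cos_of_bernsteinEllipse {ρ M : ℝ} {g : ℂ → ℂ} (hρ : 1 < ρ)
    (hg : DifferentiableOn ℂ g (bernsteinEllipse ρ)) (hb : ∀ z ∈ bernsteinEllipse ρ, ‖g z‖ ≤ M) :
    ∃ a : ℕ → ℂ, (∀ n, ‖a n‖ ≤ 2 * M * ρ⁻¹ ^ n) ∧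
      ∀ θ : ℝ, HasSum (fun n : ℕ => a n * cos ((n : ℂ) * θ)) (g (Real.cos θ)) := by
  have hρ0 : 0 < ρ := one_pos.trans hρ
  set A := closedBall (0 : ℂ) ρ \ ball 0 ρ⁻¹
  have hJ : Set.MapsTo (fun w : ℂ => (w + w⁻¹) / 2) A (bernsteinEllipse ρ) :=
    fun w hw => joukowski_mem_bernsteinEllipse hρ0 hw
  set h : ℂ → ℂ := fun w => g ((w + w⁻¹) / 2)
  have hd : DifferentiableOn ℂ h A := hg.comp ((differentiableOn_id.add (differentiableOn_id.inv
    fun w hw => ne_zero_of_mem_sdiff_ball (inv_pos.2 hρ0) hw)).div_const 2) hJ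
  set c := fourierCoeff (onUnitCircle h)
  have hc : ∀ k, ‖c k‖ ≤ M * ρ⁻¹ ^ k.natAbs :=
    norm_fourierCoeff_onUnitCircle_le hρ hd fun w hw => hb _ (hJ hw)
  have hgeom : Summable fun n : ℕ => M * ρ⁻¹ ^ n :=
    (summable_geometric_of_lt_one (inv_nonneg.2 hρ0.le) (inv_lt_one_of_one_lt₀ hρ)).mul_left M
  have hsum : Summable c := Summable.of_norm_bounded
    (Summable.of_nat_of_neg (by simpa using hgeom) (by simpa using hgeom)) hc
  have hsphere : sphere (0 : ℂ) 1 ⊆ A := fun w hw => by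
    rw [mem_sphere_zero_iff_norm] at hw
    simp [A, hw, hρ.le, inv_le_one_of_one_le₀ hρ.le]
  have heven : ∀ θ : ℝ, h (exp ((-θ : ℝ) * I)) = h (exp (θ * I)) := fun θ => by
    simp only [h, ofReal_neg, neg_mul, Complex.exp_neg, inv_inv, add_comm]
  have hM : 0 ≤ M := by simpa using (norm_nonneg _).trans (hc 0)
  refine ⟨fun n => if n = 0 then c 0 else c n + c (-n), fun n => ?_, fun θ => ?_⟩
  · rcases eq_or_ne n 0 with rfl | hn
    · simpa using (hc 0).trans (by linarith)
    · simp only [hn, if_false]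
      refine (norm_add_le _ _).trans ?_
      have := add_le_add (hc n) (hc (-n))
      simp only [Int.natAbs_neg, Int.natAbs_natCast] at this
      linarith
  · have := hasSum_cos_of_even heven
      (hasSum_fourierCoeff_onUnitCircle (hd.continuousOn.mono hsphere) hsum) θ
    rwa [show h (exp (θ * I)) = g (Real.cos θ) from congrArg g (joukowski_exp_mul_I θ)] at this

theorem exists_hasSum_T_of_bernsteinEllipse {ρ M : ℝ} {f : ℝ → ℝ} {g : ℂ → ℂ} (hρ : 1 < ρ)
    (hg : DifferentiableOn ℂ g (bernsteinEllipse ρ)) (hfg : ∀ x ∈ Set.Icc (-1 : ℝ) 1, g x = f x)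
    (hb : ∀ z ∈ bernsteinEllipse ρ, ‖g z‖ ≤ M) :
    ∃ α : ℕ → ℝ, (∀ n, |α n| ≤ 2 * M * ρ⁻¹ ^ n) ∧
      ∀ x ∈ Set.Icc (-1 : ℝ) 1, HasSum (fun n => α n * (T ℝ n).eval x) (f x) := by
  obtain ⟨a, ha, hsum⟩ := exists_hasSum_cos_of_bernsteinEllipse hρ hg hb
  refine ⟨fun n => (a n).re, fun n => (abs_re_le_norm _).trans (ha n), fun x hx => ?_⟩
  have hθ : Real.cos (arccos x) = x := cos_arccos hx.1 hx.2
  have := hasSum_re (hsum (arccos x))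
  rw [hθ, hfg x hx, ofReal_re] at this
  refine this.congr_fun fun n => ?_
  have hT : (T ℝ n).eval x = Real.cos (n * arccos x) := by
    simpa [hθ] using T_real_cos (arccos x) n
  rw [hT, show cos ((n : ℂ) * (arccos x : ℝ)) = (Real.cos (n * arccos x) : ℂ) by push_cast; rfl,
    re_mul_ofReal]

end Laurent

section Quadrature
open Real

noncomputable def clenshawCurtis {N : ℕ} (wt : Fin N → ℝ) (f : ℝ → ℝ) : ℝ :=
  ∑ j : Fin N, wt j * f (cos (j * π / (N - 1)))

/-- Aliasing: reflecting `k` modulo `2n` into `[0, n]` does not change `cos (k θ)` on the grid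
`θ = jπ/n`. -/
lemma exists_le_cos_nat_mul_eq (n k : ℕ) :
    ∃ m ≤ n, ∀ j : ℕ, cos (m * (j * π / n)) = cos (k * (j * π / n)) := by
  rcases Nat.eq_zero_or_pos n with rfl | hn
  · exact ⟨0, le_rfl, fun j => by simp⟩
  obtain ⟨q, s, hs, rfl⟩ : ∃ q s, s < 2 * n ∧ k = 2 * n * q + s :=
    ⟨k / (2 * n), k % (2 * n), Nat.mod_lt _ (by omega), (Nat.div_add_mod k (2 * n)).symm⟩
  have hn' : (n : ℝ) ≠ 0 := by positivity
  have hperiod : ∀ j : ℕ, cos ((2 * n * q + s : ℕ) * (j * π / n)) = cos (s * (j * π / n)) := by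
    intro j
    rw [show ((2 * n * q + s : ℕ) : ℝ) * (j * π / n) = s * (j * π / n) + (q * j : ℕ) * (2 * π) by
      push_cast; field_simp; ring]
    exact cos_add_nat_mul_two_pi _ _
  by_cases hsn : s ≤ n
  · exact ⟨s, hsn, fun j => (hperiod j).symm⟩
  · refine ⟨2 * n - s, by omega, fun j => ?_⟩
    rw [hperiod, ← cos_neg (s * _), Nat.cast_sub hs.le,
      show ((2 * n : ℕ) - s : ℝ) * (j * π / n) = -(s * (j * π / n)) + j * (2 * π) by
        push_cast; field_simp; ring]
    exact cos_add_nat_mul_two_pi _ _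

lemma abs_integral_T_le_two (m : ℤ) : |∫ x in (-1 : ℝ)..1, (T ℝ m).eval x| ≤ 2 := by
  have := intervalIntegral.norm_integral_le_of_norm_le_const (a := -1) (b := 1) (C := 1)
    (f := fun x => (T ℝ m).eval x) fun x hx => by
      rw [Set.uIoc_of_le (by norm_num)] at hx
      exact abs_eval_T_real_le_one m (abs_le.2 ⟨hx.1.le, hx.2⟩)
  exact this.trans_eq (by norm_num)

def IsClenshawCurtisWeights {N : ℕ} (wt : Fin N → ℝ) : Prop :=
  ∀ P : ℝ[X], P.natDegree < N → clenshawCurtis wt P.eval = ∫ x in (-1 : ℝ)..1, P.eval x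

variable {N : ℕ} {wt : Fin N → ℝ}

lemma clenshawCurtis_T_eq_integral_T (hexact : IsClenshawCurtisWeights wt) {k : ℕ}
    (hk : k < N) :
    clenshawCurtis wt (T ℝ k).eval = ∫ x in (-1 : ℝ)..1, (T ℝ k).eval x :=
  hexact _ (by rw [natDegree_T]; simpa using hk)

lemma exists_clenshawCurtis_T_eq_integral_T (hexact : IsClenshawCurtisWeights wt) (hN : 0 < N)
    (k : ℕ) :
    ∃ m < N, clenshawCurtis wt (T ℝ k).eval = ∫ x in (-1 : ℝ)..1, (T ℝ m).eval x := by
  obtain ⟨m, hm, halias⟩ := exists_le_cos_nat_mul_eq (N - 1) k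
  have hcast : (N : ℝ) - 1 = (N - 1 : ℕ) := by rw [Nat.cast_sub hN, Nat.cast_one]
  refine ⟨m, by omega, ?_⟩
  rw [← clenshawCurtis_T_eq_integral_T hexact (by omega : m < N)]
  refine Finset.sum_congr rfl fun j _ => ?_
  simp only [hcast, T_real_cos, Int.cast_natCast, halias]

lemma abs_clenshawCurtis_T_sub_integral_T_le (hexact : IsClenshawCurtisWeights wt)
    (hN : 0 < N) (k : ℕ) :
    |clenshawCurtis wt (T ℝ k).eval - ∫ x in (-1 : ℝ)..1, (T ℝ k).eval x| ≤ 4 := by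
  obtain ⟨m, -, hm⟩ := exists_clenshawCurtis_T_eq_integral_T hexact hN k
  rw [hm]
  linarith [(abs_sub _ _).trans (add_le_add (abs_integral_T_le_two m) (abs_integral_T_le_two k))]

variable {a : ℕ → ℝ} {f : ℝ → ℝ}

lemma hasSum_integral_of_hasSum_T (ha : Summable a)
    (hf : ∀ x ∈ Set.Icc (-1 : ℝ) 1, HasSum (fun k => a k * (T ℝ k).eval x) (f x)) :
    HasSum (fun k => a k * ∫ x in (-1 : ℝ)..1, (T ℝ k).eval x) (∫ x in (-1 : ℝ)..1, f x) := by
  have hIoc : Set.uIoc (-1 : ℝ) 1 ⊆ Set.Icc (-1) 1 := by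
    rw [Set.uIoc_of_le (by norm_num)]; exact Set.Ioc_subset_Icc_self
  simp_rw [← intervalIntegral.integral_const_mul]
  refine intervalIntegral.hasSum_integral_of_dominated_convergence (fun k _ => |a k|)
    (fun k => ((T ℝ k).continuous.const_mul (a k)).aestronglyMeasurable)
    (fun k => ae_of_all _ fun x hx => ?_) (ae_of_all _ fun _ _ => ha.abs)
    intervalIntegrable_const (ae_of_all _ fun x hx => hf x (hIoc hx))
  rw [Real.norm_eq_abs, abs_mul]
  exact mul_le_of_le_one_right (abs_nonneg _) (abs_eval_T_real_le_one _ (abs_le.2 (hIoc hx)))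

lemma hasSum_clenshawCurtis_of_hasSum_T
    (hf : ∀ x ∈ Set.Icc (-1 : ℝ) 1, HasSum (fun k => a k * (T ℝ k).eval x) (f x)) :
    HasSum (fun k => a k * clenshawCurtis wt (T ℝ k).eval) (clenshawCurtis wt f) := by
  simp_rw [clenshawCurtis, Finset.mul_sum]
  refine hasSum_sum fun j _ => ?_
  simp_rw [mul_left_comm (a _)]
  exact (hf _ ⟨neg_one_le_cos _, cos_le_one _⟩).mul_left _

theorem abs_clenshawCurtis_sub_integral_le (hexact : IsClenshawCurtisWeights wt) (hN : 0 < N)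
    (ha : Summable a)
    (hf : ∀ x ∈ Set.Icc (-1 : ℝ) 1, HasSum (fun k => a k * (T ℝ k).eval x) (f x)) :
    |clenshawCurtis wt f - ∫ x in (-1 : ℝ)..1, f x| ≤ 4 * ∑' k, |a (k + N)| := by
  set e : ℕ → ℝ := fun k => clenshawCurtis wt (T ℝ k).eval - ∫ x in (-1 : ℝ)..1, (T ℝ k).eval x
  have hsum : HasSum (fun k => a k * e k) (clenshawCurtis wt f - ∫ x in (-1 : ℝ)..1, f x) := by
    simp_rw [e, mul_sub]
    exact (hasSum_clenshawCurtis_of_hasSum_T hf).sub (hasSum_integral_of_hasSum_T ha hf)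
  have hlow : ∑ k ∈ Finset.range N, a k * e k = 0 :=
    Finset.sum_eq_zero fun k hk => by
      simp [e, clenshawCurtis_T_eq_integral_T hexact (Finset.mem_range.1 hk)]
  rw [← hasSum_nat_add_iff' N, hlow, sub_zero] at hsum
  refine hsum.norm_le_of_bounded
    ((ha.comp_injective (add_left_injective N)).abs.hasSum.mul_left 4) fun k => ?_
  rw [Real.norm_eq_abs, abs_mul, mul_comm 4]
  exact mul_le_mul_of_nonneg_left (abs_clenshawCurtis_T_sub_integral_T_le hexact hN _)
    (abs_nonneg _)

end Quadrature

lemma tsum_abs_nat_add_le_of_abs_le_geometric {a : ℕ → ℝ} {B r : ℝ} (hr0 : 0 ≤ r) (hr1 : r < 1)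
    (ha : ∀ n, |a n| ≤ B * r ^ n) (N : ℕ) :
    ∑' k, |a (k + N)| ≤ B * r ^ N * (1 - r)⁻¹ := by
  have hgeom : HasSum (fun k => B * r ^ N * r ^ k) (B * r ^ N * (1 - r)⁻¹) :=
    (hasSum_geometric_of_lt_one hr0 hr1).mul_left _
  have hbound : ∀ k, |a (k + N)| ≤ B * r ^ N * r ^ k := fun k => by
    rw [mul_assoc, ← pow_add, add_comm N]; exact ha _
  exact hasSum_le hbound
    (hgeom.summable.of_nonneg_of_le (fun _ => abs_nonneg _) hbound).hasSum hgeom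

/-- Exponential convergence of Clenshaw–Curtis quadrature: for each `ρ > 1` there
is a constant `C` (depending only on `ρ`) such that, for every `f : ℝ → ℝ`
extending to a function `g` analytic on the Bernstein ellipse `E_ρ` (the image of
the annulus `1 ≤ |z| ≤ ρ` under `z ↦ (z + 1/z)/2`) and bounded there by `M`, and
for every `N ≥ 2` and weights making the quadrature rule at the Chebyshev nodes
`cos(jπ/(N−1))` exact for all polynomials of degree `< N`, the quadrature error
is at most `C · M · ρ^{−N}`. -/
theorem clenshaw_curtis_exponential_convergence (ρ : ℝ) (hρ : 1 < ρ) :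
    ∃ C : ℝ, 0 < C ∧
      ∀ (M : ℝ) (f : ℝ → ℝ) (g : ℂ → ℂ),
        DifferentiableOn ℂ g
          ((fun z : ℂ => (z + z⁻¹) / 2) ''
            {z : ℂ | 1 ≤ ‖z‖ ∧ ‖z‖ ≤ ρ}) →
        (∀ x : ℝ, x ∈ Set.Icc (-1 : ℝ) 1 → g x = f x) →
        (∀ z ∈ ((fun z : ℂ => (z + z⁻¹) / 2) ''
            {z : ℂ | 1 ≤ ‖z‖ ∧ ‖z‖ ≤ ρ}), ‖g z‖ ≤ M) →
        ∀ (N : ℕ), 2 ≤ N → ∀ (wt : Fin N → ℝ),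
          (∀ P : Polynomial ℝ, P.natDegree < N →
            ∑ j : Fin N, wt j * P.eval (Real.cos (j * Real.pi / (N - 1)))
              = ∫ x in (-1 : ℝ)..1, P.eval x) →
          |∑ j : Fin N, wt j * f (Real.cos (j * Real.pi / (N - 1)))
              - ∫ x in (-1 : ℝ)..1, f x|
            ≤ C * M * ρ ^ (-(N : ℤ)) := by
  have hr0 : 0 ≤ ρ⁻¹ := inv_nonneg.2 (one_pos.trans hρ).le
  have hr1 : ρ⁻¹ < 1 := inv_lt_one_of_one_lt₀ hρ
  refine ⟨8 * (1 - ρ⁻¹)⁻¹, by have := sub_pos.2 hr1; positivity, ?_⟩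
  intro M f g hg hfg hb N hN wt hexact
  obtain ⟨α, hα, hf⟩ := exists_hasSum_T_of_bernsteinEllipse hρ hg hfg hb
  have hα_summable : Summable α := Summable.of_norm_bounded
    ((summable_geometric_of_lt_one hr0 hr1).mul_left (2 * M)) hα
  calc |clenshawCurtis wt f - ∫ x in (-1 : ℝ)..1, f x|
      ≤ 4 * ∑' k, |α (k + N)| :=
        abs_clenshawCurtis_sub_integral_le hexact (by omega) hα_summable hf
    _ ≤ 4 * (2 * M * ρ⁻¹ ^ N * (1 - ρ⁻¹)⁻¹) := by
        gcongr; exact tsum_abs_nat_add_le_of_abs_le_geometric hr0 hr1 hα N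
    _ = 8 * (1 - ρ⁻¹)⁻¹ * M * ρ ^ (-(N : ℤ)) := by
        rw [zpow_neg, zpow_natCast, inv_pow]; ring
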